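/- Let p ≥ 2 be an integer, ε > 0, σ > 0, κ = εσ, and let f : ℝ^d → ℝ be σ-uniformly convex of order p (i.e. f(y) ≥ f(x) + ⟨∇f(x), y−x⟩ + (σ/p)‖y−x‖^p), attaining its minimum f* at x*. Let m be a positive integer with m ≥ 24p/κ^{1/p}, and let (x_{km})_{k≥0} be a restart sequence such that each epoch satisfies the accelerated-method guarantee f(x_{(k+1)m}) − f* ≤ (4p)^p · 2^{p−2} · ‖x_{km} − x*‖^p / (ε m^{(p)}), where m^{(p)} = m(m+1)⋯(m+p−1). Then for every k ≥ 0, ‖x_{(k+1)m} − x*‖^p ≤ e^{−1} ‖x_{km} − x*‖^p, and hence ‖x_{km} − x*‖^p ≤ e^{−k} ‖x_0 − x*‖^p. -/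

import Mathlib

open scoped RealInnerProductSpace
open Real Set

noncomputable section

/-- Rising factorial `m^{(p)} = m (m+1) ⋯ (m+p-1)`. -/
def risingFac (i m : ℕ) : ℕ := ∏ j ∈ Finset.range m, (i + j)

/-! Uniform convexity of order `p` makes `f` grow like the `p`-th power of the distance to the
minimizer `x*`. Each epoch therefore shrinks `‖x - x*‖^p` by the factor `p C / (κ m^{(p)})`,
where `C = (4p)^p 2^(p-2)` is the constant of the accelerated guarantee; since `m^{(p)} ≥ m^p`,
the choice `m ≥ 24p / κ^{1/p}` makes this factor at most
`p (8p)^p / (4 (24p)^p) = p / (4 · 3^p) ≤ 1/4 < e⁻¹`. -/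

theorem risingFac_eq_ascFactorial (i m : ℕ) : risingFac i m = i.ascFactorial m :=
  (Nat.ascFactorial_eq_prod_range i m).symm

theorem pow_le_risingFac (i m : ℕ) : i ^ m ≤ risingFac i m := by
  rw [risingFac_eq_ascFactorial]
  exact Nat.pow_succ_le_ascFactorial i m

theorem pow_le_mul_pow_of_div_rpow_inv_le {a κ m : ℝ} {p : ℕ} (hp : p ≠ 0) (ha : 0 ≤ a)
    (hκ : 0 < κ) (h : a / κ ^ ((1 : ℝ) / p) ≤ m) : a ^ p ≤ κ * m ^ p := by
  have hroot : (κ ^ ((1 : ℝ) / p)) ^ p = κ := by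
    rw [← Real.rpow_natCast, ← Real.rpow_mul hκ.le, one_div_mul_cancel (by exact_mod_cast hp),
      Real.rpow_one]
  have hle : a ≤ m * κ ^ ((1 : ℝ) / p) := (div_le_iff₀ (by positivity)).mp h
  calc a ^ p ≤ (m * κ ^ ((1 : ℝ) / p)) ^ p := pow_le_pow_left₀ ha hle p
    _ = κ * m ^ p := by rw [mul_pow, hroot, mul_comm]

theorem restart_constant_le (p : ℕ) (hp : 2 ≤ p) :
    4 * (p : ℝ) * ((4 * p : ℕ) ^ p * 2 ^ (p - 2)) ≤ (24 * p) ^ p := by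
  have hsplit : (4 : ℝ) * 2 ^ (p - 2) = 2 ^ p := by
    rw [← Nat.sub_add_cancel hp, pow_add, Nat.add_sub_cancel]; ring
  have hp3 : (p : ℝ) ≤ 3 ^ p := by exact_mod_cast (Nat.lt_pow_self (by norm_num)).le
  calc 4 * (p : ℝ) * ((4 * p : ℕ) ^ p * 2 ^ (p - 2)) = p * (8 * p) ^ p := by
        push_cast
        rw [show (8 : ℝ) * p = 4 * 2 * p by ring, mul_pow (4 * 2 : ℝ), mul_pow (4 : ℝ) 2, ← hsplit]
        ring
    _ ≤ 3 ^ p * (8 * p) ^ p := by gcongr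
    _ = (24 * p) ^ p := by rw [← mul_pow]; ring_nf

theorem le_div_four_of_restart_bound {σ ε p C R a b : ℝ} (hσ : 0 < σ) (hε : 0 < ε)
    (hp : 0 < p) (hR : 0 < R) (hb : 0 ≤ b) (hC : 4 * p * C ≤ ε * σ * R)
    (h : σ / p * a ≤ C * b / (ε * R)) : a ≤ b / 4 := by
  have hcleared : ε * σ * R * a ≤ p * C * b := by
    rw [div_mul_eq_mul_div, div_le_div_iff₀ hp (by positivity)] at h
    linarith
  have hκR : 0 < ε * σ * R := by positivity
  nlinarith [mul_le_mul_of_nonneg_right hC hb]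

theorem le_pow_mul_of_le_mul {α : Type*} [Semiring α] [PartialOrder α] [IsOrderedRing α]
    {c : α} (hc : 0 ≤ c) {a : ℕ → α} (h : ∀ k, a (k + 1) ≤ c * a k) (k : ℕ) :
    a k ≤ c ^ k * a 0 := by
  induction k with
  | zero => simp
  | succ k ih =>
    calc a (k + 1) ≤ c * a k := h k
      _ ≤ c * (c ^ k * a 0) := mul_le_mul_of_nonneg_left ih hc
      _ = c ^ (k + 1) * a 0 := by rw [pow_succ', mul_assoc]

theorem growth_of_uniformlyConvex_at_min {E : Type*} [NormedAddCommGroup E]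
    [InnerProductSpace ℝ E] [CompleteSpace E] {f : E → ℝ} {xstar : E} {σ : ℝ} {p : ℕ}
    (hmin : ∀ x, f xstar ≤ f x)
    (huc : ∀ y, f y ≥ f xstar + ⟪gradient f xstar, y - xstar⟫ + (σ / p) * ‖y - xstar‖ ^ p)
    (x : E) : (σ / p) * ‖x - xstar‖ ^ p ≤ f x - f xstar := by
  have hloc : IsLocalMin f xstar := Filter.Eventually.of_forall hmin
  have hgrad : gradient f xstar = 0 := by rw [gradient, hloc.fderiv_eq_zero, map_zero]
  have := huc x
  rw [hgrad, inner_zero_left] at this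
  linarith

theorem one_div_four_le_exp_neg_one : (1 : ℝ) / 4 ≤ Real.exp (-1) :=
  le_trans (by norm_num) Real.exp_neg_one_gt_d9.le

theorem restart_scheme_linear_rate
    (d p : ℕ) (hp : 2 ≤ p) (ε σ κ : ℝ) (hε : 0 < ε) (hσ : 0 < σ) (hκ : κ = ε * σ)
    (f : EuclideanSpace ℝ (Fin d) → ℝ)
    (huc : ∀ x y : EuclideanSpace ℝ (Fin d),
      f y ≥ f x + ⟪gradient f x, y - x⟫ + (σ / p) * ‖y - x‖ ^ p)
    (xstar : EuclideanSpace ℝ (Fin d)) (hmin : ∀ x, f xstar ≤ f x)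
    (m : ℕ) (hm : 0 < m) (hm' : 24 * (p : ℝ) / κ ^ ((1 : ℝ) / (p : ℝ)) ≤ (m : ℝ))
    (u : ℕ → EuclideanSpace ℝ (Fin d))
    (hguar : ∀ k : ℕ, f (u (k + 1)) - f xstar ≤
      ((4 * p : ℕ) : ℝ) ^ p * 2 ^ (p - 2) * ‖u k - xstar‖ ^ p / (ε * (risingFac m p : ℝ))) :
    (∀ k : ℕ, ‖u (k + 1) - xstar‖ ^ p ≤ Real.exp (-1) * ‖u k - xstar‖ ^ p) ∧
    (∀ k : ℕ, ‖u k - xstar‖ ^ p ≤ Real.exp (-(k : ℝ)) * ‖u 0 - xstar‖ ^ p) := by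
  have hκpos : 0 < κ := hκ ▸ mul_pos hε hσ
  have hmR : (m : ℝ) ^ p ≤ risingFac m p := by exact_mod_cast pow_le_risingFac m p
  have hRpos : (0 : ℝ) < risingFac m p := lt_of_lt_of_le (by positivity) hmR
  have hconst : 4 * (p : ℝ) * ((4 * p : ℕ) ^ p * 2 ^ (p - 2)) ≤ ε * σ * risingFac m p :=
    calc _ ≤ (24 * (p : ℝ)) ^ p := restart_constant_le p hp
      _ ≤ κ * m ^ p := pow_le_mul_pow_of_div_rpow_inv_le (by omega) (by positivity) hκpos hm'
      _ ≤ ε * σ * risingFac m p := hκ ▸ mul_le_mul_of_nonneg_left hmR hκpos.le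
  have hstep : ∀ k : ℕ, ‖u (k + 1) - xstar‖ ^ p ≤ Real.exp (-1) * ‖u k - xstar‖ ^ p := by
    intro k
    have hquarter := le_div_four_of_restart_bound hσ hε (by positivity) hRpos (by positivity)
      hconst ((growth_of_uniformlyConvex_at_min hmin (huc xstar) _).trans (hguar k))
    calc _ ≤ ‖u k - xstar‖ ^ p / 4 := hquarter
      _ ≤ Real.exp (-1) * ‖u k - xstar‖ ^ p := by
        rw [div_eq_inv_mul, ← one_div]
        gcongr
        exact one_div_four_le_exp_neg_one
  refine ⟨hstep, fun k => ?_⟩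
  rw [show -(k : ℝ) = k * (-1) by ring, Real.exp_nat_mul]
  exact le_pow_mul_of_le_mul (a := fun k => ‖u k - xstar‖ ^ p) (Real.exp_pos _).le hstep k
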